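/- arXiv:2409.18870 — 6 statements merged into one kernel-verified Lean document; each statement's English description precedes it below -/
import Mathlib

section
/- Let S be a finite p-group of nilpotency class two, let T be a normal subgroup of S which decomposes as an internal direct product T = T₁ × ⋯ × Tₙ where each Tᵢ is non-abelian of nilpotency class two, and suppose s ∈ S permutes the set {T₁, …, Tₙ} by conjugation. Then s normalizes each Tᵢ. -/
/-! If `s` carried `Tᵢ` onto some `Tⱼ` with `j ≠ i`, then for `x, y ∈ Tᵢ` the conjugate
`s x s⁻¹ ∈ Tⱼ` commutes with `y`. In class two it differs from `x` only by the central
commutator `⁅s, x⁆`, so `x` commutes with `y` and `Tᵢ` would be abelian. -/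

open scoped commutatorElement

section ClassTwo

variable {G : Type*} [Group G]

theorem commute_conj_iff_of_commutator_le_center (hG : commutator G ≤ Subgroup.center G)
    (s x y : G) : Commute (s * x * s⁻¹) y ↔ Commute x y := by
  have hcentral : ⁅s, x⁆ ∈ Subgroup.center G :=
    hG (Subgroup.commutator_mem_commutator (Subgroup.mem_top s) (Subgroup.mem_top x))
  have hzy : Commute ⁅s, x⁆ y := ((Subgroup.mem_center_iff.mp hcentral) y).symm
  have hconj : s * x * s⁻¹ = ⁅s, x⁆ * x := by
    simp only [commutatorElement_def, mul_assoc, inv_mul_cancel, mul_one]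
  rw [hconj]
  constructor
  · intro h
    simpa only [inv_mul_cancel_left] using hzy.inv_left.mul_left h
  · exact hzy.mul_left

theorem commute_of_map_conj_eq_of_commute (hG : commutator G ≤ Subgroup.center G)
    {s : G} {H K : Subgroup G} (hHK : H.map (MulAut.conj s).toMonoidHom = K)
    (hKH : ∀ x ∈ K, ∀ y ∈ H, Commute x y) : ∀ x ∈ H, ∀ y ∈ H, Commute x y := by
  intro x hx y hy
  have hsx : s * x * s⁻¹ ∈ K := hHK ▸ ⟨x, hx, rfl⟩
  exact (commute_conj_iff_of_commutator_le_center hG s x y).mp (hKH _ hsx y hy)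

end ClassTwo

theorem stmt_0_general {S : Type*} [Group S]
    (hclass2 : commutator S ≤ Subgroup.center S)
    {n : ℕ} (Ti : Fin n → Subgroup S)
    (hcommuting : ∀ i j, i ≠ j → ∀ x ∈ Ti i, ∀ y ∈ Ti j, Commute x y)
    (hTi_nonab : ∀ i, ¬ (∀ x ∈ Ti i, ∀ y ∈ Ti i, Commute x y))
    (s : S)
    (hperm : ∀ i, ∃ j, Subgroup.map (MulAut.conj s).toMonoidHom (Ti i) = Ti j) :
    ∀ i, Subgroup.map (MulAut.conj s).toMonoidHom (Ti i) = Ti i := by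
  intro i
  obtain ⟨j, hj⟩ := hperm i
  rcases eq_or_ne j i with rfl | hne
  · exact hj
  · exact absurd (commute_of_map_conj_eq_of_commute hclass2 hj (hcommuting j i hne)) (hTi_nonab i)

/-- Let `S` be a finite `p`-group of nilpotency class two, let `T ⊴ S`
decompose as an internal direct product of subgroups `Tᵢ`, each non-abelian of class two,
and suppose `s ∈ S` permutes the set of the `Tᵢ` by conjugation. Then `s` normalizes
each `Tᵢ`. -/
theorem stmt_0 {p : ℕ} (hp : p.Prime) {S : Type*} [Group S] [Finite S]
    (hpS : IsPGroup p S)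
    (hclass2 : commutator S ≤ Subgroup.center S) (hnonab : commutator S ≠ ⊥)
    {n : ℕ} (T : Subgroup S) (hT : T.Normal) (Ti : Fin n → Subgroup S)
    (hsup : (⨆ i, Ti i) = T)
    (hindep : iSupIndep Ti)
    (hcommuting : ∀ i j, i ≠ j → ∀ x ∈ Ti i, ∀ y ∈ Ti j, Commute x y)
    (hTi_nonab : ∀ i, ¬ (∀ x ∈ Ti i, ∀ y ∈ Ti i, Commute x y))
    (hTi_class2 : ∀ i, ⁅Ti i, Ti i⁆ ≤ Subgroup.centralizer (Ti i : Set S) ⊓ Ti i)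
    (s : S)
    (hperm : ∀ i, ∃ j, Subgroup.map (MulAut.conj s).toMonoidHom (Ti i) = Ti j) :
    ∀ i, Subgroup.map (MulAut.conj s).toMonoidHom (Ti i) = Ti i :=
  stmt_0_general hclass2 Ti hcommuting hTi_nonab s hperm
end

section
/- Let S be a finite 2-group of nilpotency class two and let P be a normal subgroup of S isomorphic to the dihedral group of order 8. Then S = P · C_S(P), i.e., every element of S is a product of an element of P and an element centralizing P. -/
/-!
Since `[S, S] ≤ Z(S)`, conjugation by `x ∈ S` restricts to an automorphism of `P` moving every
element by a central factor, i.e. a central automorphism. For `D₈` the centre is `{1, r²}`, and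
its four central automorphisms are exactly its four inner ones (checked on the generators `r`
and `s`). So conjugation by `x` agrees on `P` with conjugation by some `p ∈ P`, and `p⁻¹ x`
centralizes `P`.
-/

open Subgroup

def MulAut.IsCentral {G : Type*} [Group G] (σ : MulAut G) : Prop :=
  ∀ g, σ g * g⁻¹ ∈ center G

namespace DihedralGroup

theorem monoidHom_ext {n : ℕ} {G : Type*} [Group G] {f g : DihedralGroup n →* G}
    (hr : f (r 1) = g (r 1)) (hs : f (sr 0) = g (sr 0)) : f = g := by
  have hr_zpow (i : ZMod n) : r i = (r 1 : DihedralGroup n) ^ (i.cast : ℤ) := by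
    rw [r_one_zpow, ZMod.intCast_zmod_cast]
  ext (i | i)
  · rw [hr_zpow, map_zpow, map_zpow, hr]
  · rw [← zero_add i, ← sr_mul_r, map_mul, map_mul, hr_zpow, map_zpow, map_zpow, hr, hs]

theorem exists_eq_conj_of_isCentral {σ : MulAut (DihedralGroup 4)}
    (hσ : σ.IsCentral) : ∃ h, σ = MulAut.conj h := by
  have key : ∀ z₁ ∈ center (DihedralGroup 4), ∀ z₂ ∈ center (DihedralGroup 4),
      ∃ h : DihedralGroup 4, h * r 1 * h⁻¹ = z₁ * r 1 ∧ h * sr 0 * h⁻¹ = z₂ * sr 0 := by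
    decide
  obtain ⟨h, hr, hs⟩ := key _ (hσ (r 1)) _ (hσ (sr 0))
  refine ⟨h, MulEquiv.toMonoidHom_injective (monoidHom_ext ?_ ?_)⟩
  · rw [inv_mul_cancel_right] at hr
    simp [hr]
  · rw [inv_mul_cancel_right] at hs
    simp [hs]

end DihedralGroup

namespace MulAut.IsCentral

variable {G H : Type*} [Group G] [Group H]

theorem exists_eq_conj_of_mulEquiv (e : G ≃* H)
    (hH : ∀ τ : MulAut H, τ.IsCentral → ∃ h, τ = MulAut.conj h)
    {σ : MulAut G} (hσ : σ.IsCentral) : ∃ g, σ = MulAut.conj g := by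
  obtain ⟨h, hh⟩ := hH (e.symm.trans (σ.trans e)) fun k => by
    simpa using (show _ ∈ center H from (MulEquivClass.apply_mem_center_iff e).mpr (hσ (e.symm k)))
  refine ⟨e.symm h, MulEquiv.ext fun g => e.injective ?_⟩
  simpa using DFunLike.congr_fun hh (e g)

end MulAut.IsCentral

section ConjNormal

variable {S : Type*} [Group S] {P : Subgroup S} [P.Normal]

theorem MulAut.isCentral_conjNormal (hZ : commutator S ≤ center S) (x : S) :
    (MulAut.conjNormal x : MulAut P).IsCentral := by
  intro q
  have hcomm : x * q * x⁻¹ * (q : S)⁻¹ ∈ center S :=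
    hZ (commutator_mem_commutator (mem_top x) (mem_top (q : S)))
  rw [mem_center_iff] at hcomm ⊢
  intro p
  ext
  simpa [MulAut.conjNormal_apply] using hcomm p

theorem inv_mul_mem_centralizer_of_conjNormal_eq_conj {x : S} {p : P}
    (h : MulAut.conjNormal x = MulAut.conj p) : (p : S)⁻¹ * x ∈ centralizer (P : Set S) := by
  rw [mem_centralizer_iff]
  intro q hq
  have hq' := congrArg Subtype.val (DFunLike.congr_fun h ⟨q, hq⟩)
  simp only [MulAut.conjNormal_apply, MulAut.conj_apply, coe_mul, coe_inv] at hq'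
  calc q * ((p : S)⁻¹ * x) = (p : S)⁻¹ * ((p : S) * q * (p : S)⁻¹) * x := by group
    _ = (p : S)⁻¹ * x * q := by rw [← hq']; group

end ConjNormal

theorem stmt_1_general {S : Type*} [Group S]
    (hclass2 : commutator S ≤ Subgroup.center S)
    (P : Subgroup S) (hP : P.Normal) (hDih : Nonempty (P ≃* DihedralGroup 4)) :
    ∀ x : S, ∃ p ∈ P, ∃ c ∈ Subgroup.centralizer (P : Set S), x = p * c := by
  intro x
  obtain ⟨e⟩ := hDih
  obtain ⟨p, hp⟩ := (MulAut.isCentral_conjNormal hclass2 x).exists_eq_conj_of_mulEquiv e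
    fun _ => DihedralGroup.exists_eq_conj_of_isCentral
  exact ⟨p, p.2, _, inv_mul_mem_centralizer_of_conjNormal_eq_conj hp, (mul_inv_cancel_left _ _).symm⟩

/-- Let `S` be a finite `2`-group of nilpotency class two and let
`P ⊴ S` with `P ≅ Dih(8)`. Then `S = P · C_S(P)`. -/
theorem stmt_1 {S : Type*} [Group S] [Finite S] (hS : IsPGroup 2 S)
    (hclass2 : commutator S ≤ Subgroup.center S) (hnonab : commutator S ≠ ⊥)
    (P : Subgroup S) (hP : P.Normal) (hDih : Nonempty (P ≃* DihedralGroup 4)) :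
    ∀ x : S, ∃ p ∈ P, ∃ c ∈ Subgroup.centralizer (P : Set S), x = p * c :=
  stmt_1_general hclass2 P hP hDih
end

section
/- Let S be a finite 2-group and let A, B be elementary abelian subgroups of S of maximal rank with AB = S. If C_B(a) = A ∩ B for every a ∈ A \ (A ∩ B), then A and B are the only elementary abelian subgroups of S of maximal rank, and every involution of S lies in A ∪ B. -/
/-- A subgroup is elementary abelian of exponent 2 iff every element squares to 1
(this forces commutativity). -/
def IsElemAb2 {S : Type*} [Group S] (H : Subgroup S) : Prop :=
  ∀ x ∈ H, x * x = 1

/-- Let `S` be a finite `2`-group and `A, B` elementary abelian subgroups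
of maximal order with `AB = S`. If `C_B(a) = A ∩ B` for every `a ∈ A \ (A ∩ B)`, then
`A` and `B` are the only elementary abelian subgroups of maximal order, and every
involution of `S` lies in `A ∪ B`. -/
theorem stmt_2 {S : Type*} [Group S] [Finite S] (hS : IsPGroup 2 S)
    (A B : Subgroup S) (hA : IsElemAb2 A) (hB : IsElemAb2 B)
    (hAmax : ∀ C : Subgroup S, IsElemAb2 C → Nat.card C ≤ Nat.card A)
    (hBA : Nat.card B = Nat.card A)
    (hprod : ∀ x : S, ∃ a ∈ A, ∃ b ∈ B, x = a * b)
    (hcent : ∀ a : S, a ∈ A → a ∉ B → B ⊓ Subgroup.centralizer {a} = A ⊓ B) :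
    (∀ C : Subgroup S, IsElemAb2 C → Nat.card C = Nat.card A → C = A ∨ C = B) ∧
      (∀ x : S, x ≠ 1 → x * x = 1 → x ∈ A ∨ x ∈ B) := by
  -- every involution lies in A ∪ B
  have hinv : ∀ x : S, x * x = 1 → x ∈ A ∨ x ∈ B := by
    intro x hx2
    obtain ⟨a, ha, b, hb, rfl⟩ := hprod x
    have hainv : a⁻¹ = a := by
      have := hA a ha; exact inv_eq_of_mul_eq_one_left this
    have hbinv : b⁻¹ = b := by
      have := hB b hb; exact inv_eq_of_mul_eq_one_left this
    have hcomm : b * a = a * b := by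
      have : (a * b)⁻¹ = a * b := inv_eq_of_mul_eq_one_left hx2
      calc b * a = b⁻¹ * a⁻¹ := by rw [hainv, hbinv]
        _ = (a * b)⁻¹ := by rw [mul_inv_rev]
        _ = a * b := this
    by_cases haB : a ∈ B
    · exact Or.inr (B.mul_mem haB hb)
    · have hbA : b ∈ A ⊓ B := by
        rw [← hcent a ha haB]
        exact ⟨hb, Subgroup.mem_centralizer_iff.mpr (by
          intro y hy; rcases hy with rfl; exact hcomm.symm)⟩
      exact Or.inl (A.mul_mem ha hbA.1)
  refine ⟨?_, fun x _ hx => hinv x hx⟩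
  intro C hC hCcard
  by_cases hCA : C ≤ A
  · exact Or.inl (Subgroup.eq_of_le_of_card_ge hCA hCcard.ge)
  · right
    -- C ⊄ A, pick c ∈ C \ A; then c ∈ B
    obtain ⟨c, hcC, hcA⟩ := SetLike.not_le_iff_exists.mp hCA
    have hcB : c ∈ B := (hinv c (hC c hcC)).resolve_left hcA
    -- claim C ≤ B
    have hCB : C ≤ B := by
      intro d hdC
      by_contra hdB
      have hdA : d ∈ A := (hinv d (hC d hdC)).resolve_right hdB
      -- c commutes with d since C is elementary abelian
      have hcomm : c * d = d * c := by
        have h1 := hC _ (C.mul_mem hdC hcC)  -- (d*c)^2 = 1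
        have hdinv : d⁻¹ = d := inv_eq_of_mul_eq_one_left (hC d hdC)
        have hcinv : c⁻¹ = c := inv_eq_of_mul_eq_one_left (hC c hcC)
        calc c * d = c⁻¹ * d⁻¹ := by rw [hdinv, hcinv]
          _ = (d * c)⁻¹ := by rw [mul_inv_rev]
          _ = d * c := inv_eq_of_mul_eq_one_left h1
      have : c ∈ A ⊓ B := by
        rw [← hcent d hdA hdB]
        exact ⟨hcB, Subgroup.mem_centralizer_iff.mpr (by
          intro y hy; rcases hy with rfl; exact hcomm.symm)⟩
      exact hcA this.1
    exact Subgroup.eq_of_le_of_card_ge hCB (hCcard.trans hBA.symm).ge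
end

section
/- Let S be a finite 2-group, and let A, B be elementary abelian subgroups with AB = S such that C_B(a) = A ∩ B for all a ∈ A \ (A ∩ B). Then every involution of S lies in A ∪ B. -/
/-- Let `S` be a finite `2`-group, and `A, B` elementary abelian subgroups
with `AB = S` such that `C_B(a) = A ∩ B` for all `a ∈ A \ (A ∩ B)`. Then every involution
of `S` lies in `A ∪ B`. -/
theorem stmt_3 {S : Type*} [Group S] [Finite S] (hS : IsPGroup 2 S)
    (A B : Subgroup S)
    (hA : ∀ x ∈ A, x * x = 1) (hB : ∀ x ∈ B, x * x = 1)
    (hprod : ∀ x : S, ∃ a ∈ A, ∃ b ∈ B, x = a * b)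
    (hcent : ∀ a : S, a ∈ A → a ∉ B → B ⊓ Subgroup.centralizer {a} = A ⊓ B) :
    ∀ x : S, x ≠ 1 → x * x = 1 → x ∈ A ∨ x ∈ B := by
  intro x hx1 hx2
  obtain ⟨a, ha, b, hb, rfl⟩ := hprod x
  have hainv : a⁻¹ = a := inv_eq_of_mul_eq_one_left (hA a ha)
  have hbinv : b⁻¹ = b := inv_eq_of_mul_eq_one_left (hB b hb)
  have hcomm : b * a = a * b := by
    have h : a * b = (a * b)⁻¹ := by
      rw [eq_inv_iff_mul_eq_one]; exact hx2
    rw [mul_inv_rev, hainv, hbinv] at h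
    exact h.symm
  by_cases haB : a ∈ B
  · right; exact B.mul_mem haB hb
  · left
    have hbmem : b ∈ B ⊓ Subgroup.centralizer {a} := by
      refine ⟨hb, Subgroup.mem_centralizer_iff.mpr ?_⟩
      intro m hm
      rw [Set.mem_singleton_iff] at hm
      subst hm
      exact hcomm.symm
    rw [hcent a ha haB] at hbmem
    exact A.mul_mem ha hbmem.1
end

section
/- Let S be a finite p-group of nilpotency class two with exactly two elementary abelian subgroups A, B of maximal order satisfying AB = S and A ∩ B = Z(S). Then for every maximal (by order) abelian subgroup M of S, |M| ≤ |S : E| · |M ∩ E| for E ∈ {A, B}, and consequently |M| ≤ |A|; in particular A and B are abelian subgroups of maximal order in S. -/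
/-- A subgroup is elementary abelian of exponent 2-type: here for a general prime `p`,
abelian with every element of order dividing `p`. -/
def IsElemAbP {S : Type*} [Group S] (p : ℕ) (H : Subgroup S) : Prop :=
  (∀ x ∈ H, x ^ p = 1) ∧ ∀ x ∈ H, ∀ y ∈ H, Commute x y

/-!
The first two bounds hold for any subgroups: the cosets of `M ⊓ E` in `M` lie in distinct cosets
of `E`. For the last one, either `M ≤ A`, or some `x ∈ M \ A` centralizes
`M ⊓ A`, so that `M ⊓ A ≤ C_A(x) = Z(S) = A ⊓ B`; then `|M| ≤ |S : A| · |A ⊓ B| = |B| = |A|`,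
the middle equality because `S = AB` makes `B → S ⧸ A` surjective.
-/

namespace Subgroup

variable {G : Type*} [Group G]

theorem relIndex_mul_card_inf (H K : Subgroup G) :
    H.relIndex K * Nat.card (K ⊓ H : Subgroup G) = Nat.card K := by
  simpa only [relIndex_bot_left, bot_inf_eq, inf_comm K, mul_comm] using
    relIndex_inf_mul_relIndex ⊥ H K

theorem card_le_index_mul_card_inf (H M : Subgroup G) [H.FiniteIndex] :
    Nat.card M ≤ H.index * Nat.card (M ⊓ H : Subgroup G) := by
  rw [← H.relIndex_mul_card_inf M]
  gcongr
  simpa only [relIndex_top_right] using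
    relIndex_le_of_le_right le_top (relIndex_top_right H ▸ FiniteIndex.index_ne_zero)

theorem relIndex_eq_index_of_forall_eq_mul {H K : Subgroup G}
    (hHK : ∀ x : G, ∃ a ∈ H, ∃ b ∈ K, x = a * b) : H.relIndex K = H.index := by
  let f := quotientSubgroupOfEmbeddingOfLE H (le_top : K ≤ ⊤)
  have hf : Function.Surjective f := by
    intro q
    induction q using QuotientGroup.induction_on with | H q =>
    obtain ⟨a, ha, b, hb, hab⟩ := hHK q⁻¹
    refine ⟨QuotientGroup.mk ⟨b⁻¹, K.inv_mem hb⟩, ?_⟩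
    rw [quotientSubgroupOfEmbeddingOfLE_apply_mk, QuotientGroup.eq, mem_subgroupOf]
    have hbq : b * q = a⁻¹ := by rw [← inv_inv (q : G), hab]; group
    simpa [hbq] using H.inv_mem ha
  rw [← relIndex_top_right, relIndex, relIndex, index, index]
  exact Nat.card_congr (Equiv.ofBijective f ⟨f.injective, hf⟩)

theorem index_mul_card_inf_of_forall_eq_mul {H K : Subgroup G}
    (hHK : ∀ x : G, ∃ a ∈ H, ∃ b ∈ K, x = a * b) :
    H.index * Nat.card (K ⊓ H : Subgroup G) = Nat.card K := by
  rw [← relIndex_eq_index_of_forall_eq_mul hHK, relIndex_mul_card_inf]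

end Subgroup

theorem stmt_13_general {S : Type*} [Group S] [Finite S]
    (A B : Subgroup S)
    (hBA : Nat.card B = Nat.card A)
    (hprod : ∀ x : S, ∃ a ∈ A, ∃ b ∈ B, x = a * b)
    (hAB : A ⊓ B = Subgroup.center S)
    (hcentA : ∀ x : S, x ∉ A → A ⊓ Subgroup.centralizer {x} = Subgroup.center S) :
    ∀ M : Subgroup S, (∀ x ∈ M, ∀ y ∈ M, Commute x y) →
      Nat.card M ≤ A.index * Nat.card (M ⊓ A : Subgroup S) ∧
      Nat.card M ≤ B.index * Nat.card (M ⊓ B : Subgroup S) ∧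
      Nat.card M ≤ Nat.card A := by
  intro M hM
  refine ⟨A.card_le_index_mul_card_inf M, B.card_le_index_mul_card_inf M, ?_⟩
  by_cases hMA : M ≤ A
  · exact Subgroup.card_le_of_le hMA
  obtain ⟨x, hxM, hxA⟩ := SetLike.not_le_iff_exists.mp hMA
  have hMA_le : M ⊓ A ≤ B ⊓ A := by
    rintro y ⟨hyM, hyA⟩
    have hy : y ∈ A ⊓ Subgroup.centralizer {x} :=
      ⟨hyA, Subgroup.mem_centralizer_singleton_iff.mpr (hM y hyM x hxM)⟩
    rw [hcentA x hxA, ← hAB] at hy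
    exact ⟨hy.2, hy.1⟩
  calc Nat.card M ≤ A.index * Nat.card (M ⊓ A : Subgroup S) := A.card_le_index_mul_card_inf M
    _ ≤ A.index * Nat.card (B ⊓ A : Subgroup S) := by gcongr; exact Subgroup.card_le_of_le hMA_le
    _ = Nat.card A := by rw [Subgroup.index_mul_card_inf_of_forall_eq_mul hprod, hBA]

/-- Let `S` be a finite `p`-group of class two with exactly two
elementary abelian subgroups `A, B` of maximal order satisfying `AB = S`,
`A ∩ B = Z(S)` and `C_E(x) = Z(S)` for `x ∉ E`, `E ∈ {A, B}`. Then every abelian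
subgroup `M` of `S` satisfies `|M| ≤ |S : E|·|M ∩ E|` for `E ∈ {A, B}`, and
consequently `|M| ≤ |A|`; in particular `A` and `B` are abelian subgroups of
maximal order in `S`. -/
theorem stmt_13 {p : ℕ} (hp : p.Prime) {S : Type*} [Group S] [Finite S]
    (hpS : IsPGroup p S) (hclass2 : commutator S ≤ Subgroup.center S)
    (A B : Subgroup S) (hA : IsElemAbP p A) (hB : IsElemAbP p B)
    (hmaxA : ∀ C : Subgroup S, IsElemAbP p C → Nat.card C ≤ Nat.card A)
    (hBA : Nat.card B = Nat.card A)
    (honly : ∀ C : Subgroup S, IsElemAbP p C → Nat.card C = Nat.card A → C = A ∨ C = B)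
    (hprod : ∀ x : S, ∃ a ∈ A, ∃ b ∈ B, x = a * b)
    (hAB : A ⊓ B = Subgroup.center S)
    (hcentA : ∀ x : S, x ∉ A → A ⊓ Subgroup.centralizer {x} = Subgroup.center S)
    (hcentB : ∀ x : S, x ∉ B → B ⊓ Subgroup.centralizer {x} = Subgroup.center S) :
    ∀ M : Subgroup S, (∀ x ∈ M, ∀ y ∈ M, Commute x y) →
      Nat.card M ≤ A.index * Nat.card (M ⊓ A : Subgroup S) ∧
      Nat.card M ≤ B.index * Nat.card (M ⊓ B : Subgroup S) ∧
      Nat.card M ≤ Nat.card A :=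
  stmt_13_general A B hBA hprod hAB hcentA
end

section
/- Let S be a finite 2-group of nilpotency class two such that Z(S) has index 4 in S. If S ≅ Q₈ ∘ C₄ (central product), then ℧¹(S) = [S,S] = Z(Q₈), Z(S) is cyclic of order 4, and for every subgroup E with Z(S) < E ≤ S one has [S, E] ≤ ℧¹(E). -/
/-- `℧¹(E)`: the subgroup generated by the squares of elements of `E`. -/
def sqSubgroup {S : Type*} [Group S] (E : Subgroup S) : Subgroup S :=
  Subgroup.closure {x : S | ∃ y ∈ E, y ^ 2 = x}

open scoped commutatorElement

private lemma q8_sq : ∀ g : QuaternionGroup 2, g ^ 2 = 1 ∨ g ^ 2 = QuaternionGroup.a 2 := by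
  decide

private lemma q8_central :
    ∀ g : QuaternionGroup 2, (∀ h, g * h = h * g) → g = 1 ∨ g = QuaternionGroup.a 2 := by decide

private lemma q8_noncentral_sq :
    ∀ g : QuaternionGroup 2, g ≠ 1 → g ≠ QuaternionGroup.a 2 → g ^ 2 = QuaternionGroup.a 2 := by
  decide

private lemma q8_comm :
    ∀ g h : QuaternionGroup 2, ⁅g, h⁆ = 1 ∨ ⁅g, h⁆ = QuaternionGroup.a 2 := by decide

private lemma q8_a2_ne_one : (QuaternionGroup.a 2 : QuaternionGroup 2) ≠ 1 := by decide

private lemma q8_a2_sq : (QuaternionGroup.a 2 : QuaternionGroup 2) ^ 2 = 1 := by decide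

private lemma q8_a1_sq : (QuaternionGroup.a 1 : QuaternionGroup 2) ^ 2 = QuaternionGroup.a 2 := by
  decide

private lemma q8_noncomm :
    ¬ ((QuaternionGroup.a 1 : QuaternionGroup 2) * QuaternionGroup.xa 0 =
      QuaternionGroup.xa 0 * QuaternionGroup.a 1) := by decide

/-- Conjugation ignores a central factor. -/
private lemma comm_central_left {G : Type*} [Group G] {c : G}
    (hc : ∀ a : G, a * c = c * a) (q y : G) : ⁅q * c, y⁆ = ⁅q, y⁆ := by
  rw [commutatorElement_def, commutatorElement_def]
  congr 1
  rw [mul_inv_rev]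
  calc q * c * y * (c⁻¹ * q⁻¹) = q * (c * y * c⁻¹) * q⁻¹ := by group
    _ = q * y * q⁻¹ := by rw [← hc y, mul_inv_cancel_right]

/-- Commutator with central factors dropped. -/
private lemma comm_central {G : Type*} [Group G] {c c' : G}
    (hc : c ∈ Subgroup.center G) (hc' : c' ∈ Subgroup.center G) (q q' : G) :
    ⁅q * c, q' * c'⁆ = ⁅q, q'⁆ := by
  have h1 : ∀ a : G, a * c = c * a := Subgroup.mem_center_iff.mp hc
  have h2 : ∀ a : G, a * c' = c' * a := Subgroup.mem_center_iff.mp hc'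
  rw [comm_central_left h1, ← commutatorElement_inv (q' * c') q, comm_central_left h2,
    commutatorElement_inv]

/-- Integer powers of an involution. -/
private lemma zpow_invol {G : Type*} [Group G] {w : G} (hw : w ^ 2 = 1) :
    ∀ k : ℤ, w ^ k = 1 ∨ w ^ k = w := by
  intro k
  rcases Int.even_or_odd k with ⟨m, hm⟩ | ⟨m, hm⟩
  · left
    have h : w ^ k = (w ^ (2 : ℕ)) ^ m := by subst hm; group
    rw [h, hw, one_zpow]
  · right
    have h : w ^ k = (w ^ (2 : ℕ)) ^ m * w := by subst hm; group
    rw [h, hw, one_zpow, one_mul]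

/-- Let `S ≅ Q₈ ∘ C₄` (central product identifying the central
involutions), a group of order 16. Then `[S,S] = ℧¹(S)` has order 2, `Z(S)` is cyclic
of order 4, and for every subgroup `E` with `Z(S) < E ≤ S` one has `[S, E] ≤ ℧¹(E)`. -/
theorem stmt_16 {S : Type*} [Group S] [Finite S]
    (hclass2 : commutator S ≤ Subgroup.center S)
    (Q C : Subgroup S)
    (hQ : Nonempty (Q ≃* QuaternionGroup 2))
    (hCcyc : IsCyclic C) (hCcard : Nat.card C = 4)
    (hcomm : ∀ q ∈ Q, ∀ c ∈ C, Commute q c)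
    (hprod : ∀ x : S, ∃ q ∈ Q, ∃ c ∈ C, x = q * c)
    (hint : Nat.card (Q ⊓ C : Subgroup S) = 2) :
    commutator S = sqSubgroup (⊤ : Subgroup S) ∧
    Nat.card (commutator S) = 2 ∧
    IsCyclic (Subgroup.center S) ∧
    Nat.card (Subgroup.center S) = 4 ∧
    ∀ E : Subgroup S, Subgroup.center S < E → ⁅(⊤ : Subgroup S), E⁆ ≤ sqSubgroup E := by
  obtain ⟨e⟩ := hQ
  -- the central involution
  set ζ : Q := e.symm (QuaternionGroup.a 2) with hζ
  set z : S := (ζ : S) with hzdef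
  have hζ_sq : ζ ^ 2 = 1 := by
    rw [hζ, ← map_pow, q8_a2_sq, map_one]
  have hζ_ne : ζ ≠ 1 := by
    intro h
    exact q8_a2_ne_one (e.symm.injective (by rw [← hζ, h, map_one]))
  have hz_sq : z ^ 2 = 1 := by
    rw [hzdef, ← SubmonoidClass.coe_pow, hζ_sq, OneMemClass.coe_one]
  have hz_ne : z ≠ 1 := fun h => hζ_ne (Subtype.ext h)
  -- squares in Q
  have hQsq : ∀ u : Q, u ^ 2 = 1 ∨ u ^ 2 = ζ := by
    intro u
    rcases q8_sq (e u) with h | h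
    · left; exact e.injective (by simp [map_pow, h])
    · right
      have := congrArg e.symm h
      rwa [← map_pow, e.symm_apply_apply, ← hζ] at this
  -- C is central
  have hCab : ∀ c ∈ C, ∀ c' ∈ C, c * c' = c' * c := by
    intro c hc c' hc'
    letI : CommGroup C := hCcyc.commGroup
    exact congrArg Subtype.val (mul_comm (⟨c, hc⟩ : C) ⟨c', hc'⟩)
  have hCcen : C ≤ Subgroup.center S := by
    intro c hc
    rw [Subgroup.mem_center_iff]
    intro g
    obtain ⟨q, hq, c', hc', rfl⟩ := hprod g
    have h1 : q * c = c * q := (hcomm q hq c hc).symm.eq.symm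
    have h2 : c' * c = c * c' := hCab c' hc' c hc
    rw [mul_assoc, h2, ← mul_assoc, h1, mul_assoc]
  -- z ∈ C
  have hzC : z ∈ C := by
    have hne : (Q ⊓ C : Subgroup S) ≠ ⊥ := by
      intro h
      rw [h, Subgroup.card_bot] at hint
      omega
    obtain ⟨t, htQC, htne⟩ := (Subgroup.bot_or_exists_ne_one (Q ⊓ C)).resolve_left hne
    obtain ⟨htQ, htC⟩ := htQC
    have htcen : ∀ h : QuaternionGroup 2, e ⟨t, htQ⟩ * h = h * e ⟨t, htQ⟩ := by
      intro h
      have : (⟨t, htQ⟩ : Q) * e.symm h = e.symm h * ⟨t, htQ⟩ := by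
        apply Subtype.ext
        have := hcomm _ (e.symm h).2 t htC
        exact this.symm.eq
      calc e ⟨t, htQ⟩ * h = e (⟨t, htQ⟩ * e.symm h) := by rw [map_mul, e.apply_symm_apply]
        _ = e (e.symm h * ⟨t, htQ⟩) := by rw [this]
        _ = h * e ⟨t, htQ⟩ := by rw [map_mul, e.apply_symm_apply]
    rcases q8_central (e ⟨t, htQ⟩) htcen with h | h
    · have h1 : (⟨t, htQ⟩ : Q) = 1 := e.injective (by rw [h, map_one])
      exact absurd (congrArg Subtype.val h1) htne
    · have : (⟨t, htQ⟩ : Q) = ζ := by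
        rw [hζ]; exact e.injective (by rw [e.apply_symm_apply, h])
      rw [hzdef, ← this]; exact htC
  -- squares in C
  have hCsq : ∀ c ∈ C, c ^ 2 = 1 ∨ c ^ 2 = z := by
    obtain ⟨g, hgen⟩ := hCcyc.exists_generator
    have hog : orderOf g = 4 := by
      rw [orderOf_eq_card_of_forall_mem_zpowers hgen, hCcard]
    set w : C := g ^ 2 with hw
    have hw_sq : w ^ 2 = 1 := by
      rw [hw, ← pow_mul]
      have : g ^ 4 = 1 := by rw [← hog, pow_orderOf_eq_one]
      exact this
    have hw_ne : w ≠ 1 := by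
      intro h
      have := orderOf_dvd_of_pow_eq_one (n := 2) h
      rw [hog] at this
      omega
    have hA : ∀ u : C, u ^ 2 = 1 ∨ u ^ 2 = w := by
      intro u
      obtain ⟨k, hk⟩ := hgen u
      have : u ^ 2 = w ^ k := by rw [← hk, hw]; group
      rw [this]
      exact zpow_invol hw_sq k
    have hzw : (⟨z, hzC⟩ : C) = w := by
      obtain ⟨k, hk⟩ := hgen ⟨z, hzC⟩
      have hzk : g ^ (2 * k) = 1 := by
        have h2 : (⟨z, hzC⟩ : C) ^ 2 = 1 := Subtype.ext (by
          rw [SubmonoidClass.coe_pow]; exact hz_sq)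
        rw [← hk] at h2
        calc g ^ (2 * k) = (g ^ k) ^ 2 := by group
          _ = 1 := h2
      have hdvd : (4 : ℤ) ∣ 2 * k := by
        have := orderOf_dvd_iff_zpow_eq_one.mpr hzk
        rwa [hog] at this
      obtain ⟨m, hm⟩ : ∃ m : ℤ, k = 2 * m := ⟨k / 2, by omega⟩
      have : (⟨z, hzC⟩ : C) = w ^ m := by rw [← hk, hm, hw]; group
      rcases zpow_invol hw_sq m with h | h
      · exfalso
        apply hz_ne
        have := this.trans h
        exact congrArg Subtype.val this
      · exact this.trans h
    intro c hc
    rcases hA ⟨c, hc⟩ with h | h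
    · left; exact congrArg Subtype.val h
    · right
      have := h.trans hzw.symm
      exact congrArg Subtype.val this
  -- squares in S
  have hQsq' : ∀ q ∈ Q, q ^ 2 = 1 ∨ q ^ 2 = z := by
    intro q hq
    rcases hQsq ⟨q, hq⟩ with h | h
    · left; exact congrArg Subtype.val h
    · right; exact congrArg Subtype.val h
  have hSsq : ∀ x : S, x ^ 2 = 1 ∨ x ^ 2 = z := by
    intro x
    obtain ⟨q, hq, c, hc, rfl⟩ := hprod x
    have hqc : Commute q c := hcomm q hq c hc
    rw [hqc.mul_pow]
    rcases hQsq' q hq with h1 | h1 <;> rcases hCsq c hc with h2 | h2 <;> rw [h1, h2]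
    · left; rw [one_mul]
    · right; rw [one_mul]
    · right; rw [mul_one]
    · left; rw [← pow_two, hz_sq]
  -- the subgroup {1, z}
  set Zz : Subgroup S := Subgroup.zpowers z with hZz
  have memZz : ∀ y : S, y ∈ Zz ↔ (y = 1 ∨ y = z) := by
    intro y
    constructor
    · intro hy
      obtain ⟨k, hk⟩ := Subgroup.mem_zpowers_iff.mp hy
      rcases zpow_invol hz_sq k with h | h
      · left; rw [← hk, h]
      · right; rw [← hk, h]
    · rintro (rfl | rfl)
      · exact one_mem _
      · exact Subgroup.mem_zpowers z
  -- all commutators are in Zz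
  have hmapc : ∀ u v : Q, e ⁅u, v⁆ = ⁅e u, e v⁆ := fun u v => by
    simp [commutatorElement_def]
  have hQcomm : ∀ u v : Q, ⁅u, v⁆ = 1 ∨ ⁅u, v⁆ = ζ := by
    intro u v
    rcases q8_comm (e u) (e v) with h | h
    · left
      apply e.injective
      rw [hmapc, h, map_one]
    · right
      apply e.injective
      rw [hmapc, h, hζ, e.apply_symm_apply]
  have hcomm_mem : ∀ x y : S, ⁅x, y⁆ ∈ Zz := by
    intro x y
    obtain ⟨q, hq, c, hc, rfl⟩ := hprod x
    obtain ⟨q', hq', c', hc', rfl⟩ := hprod y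
    rw [comm_central (hCcen hc) (hCcen hc')]
    have hcoe : ⁅q, q'⁆ = ((⁅(⟨q, hq⟩ : Q), (⟨q', hq'⟩ : Q)⁆ : Q) : S) := rfl
    rw [hcoe, memZz]
    rcases hQcomm ⟨q, hq⟩ ⟨q', hq'⟩ with h | h
    · left; rw [h]; rfl
    · right; rw [h]
  -- z is a commutator
  have hz_comm : z ∈ commutator S := by
    set u : Q := e.symm (QuaternionGroup.a 1) with hu
    set v : Q := e.symm (QuaternionGroup.xa 0) with hv
    have hne : ⁅(u : S), (v : S)⁆ ≠ 1 := by
      intro h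
      rw [commutatorElement_eq_one_iff_mul_comm] at h
      apply q8_noncomm
      have huv : u * v = v * u := Subtype.coe_injective h
      have := congrArg e huv
      rw [map_mul, map_mul, hu, hv, e.apply_symm_apply, e.apply_symm_apply] at this
      exact this
    have hmem := hcomm_mem (u : S) (v : S)
    rw [memZz] at hmem
    rcases hmem with h | h
    · exact absurd h hne
    · rw [← h]
      exact Subgroup.commutator_mem_commutator (Subgroup.mem_top _) (Subgroup.mem_top _)
  have hcommutator : commutator S = Zz := by
    apply le_antisymm
    · rw [commutator_def, Subgroup.commutator_le]
      intro g _ h _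
      exact hcomm_mem g h
    · exact Subgroup.zpowers_le.mpr hz_comm
  -- sqSubgroup ⊤ = Zz
  have hq0 : ∃ x : S, x ^ 2 = z := by
    refine ⟨(e.symm (QuaternionGroup.a 1) : Q), ?_⟩
    have : (e.symm (QuaternionGroup.a 1)) ^ 2 = ζ := by
      rw [hζ, ← map_pow, q8_a1_sq]
    rw [← SubmonoidClass.coe_pow, this]
  have hsq_top : sqSubgroup (⊤ : Subgroup S) = Zz := by
    apply le_antisymm
    · rw [sqSubgroup, Subgroup.closure_le]
      rintro x ⟨y, -, rfl⟩
      rw [SetLike.mem_coe, memZz]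
      exact hSsq y
    · apply Subgroup.zpowers_le.mpr
      obtain ⟨x, hx⟩ := hq0
      exact Subgroup.subset_closure ⟨x, Subgroup.mem_top x, hx⟩
  -- center = C
  have hcenter : Subgroup.center S = C := by
    apply le_antisymm
    · intro x hx
      obtain ⟨q, hq, c, hc, rfl⟩ := hprod x
      have hccen := hCcen hc
      have hqcen : ∀ r ∈ Q, q * r = r * q := by
        intro r hr
        have hx' := Subgroup.mem_center_iff.mp hx
        have hc' := Subgroup.mem_center_iff.mp hccen
        have h2 : (q * c) * (r * c⁻¹) = q * r := by
          rw [mul_assoc, ← mul_assoc c r, ← hc' r, mul_assoc r, mul_inv_cancel, mul_one]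
        have h3 : (r * c⁻¹) * (q * c) = r * q := by
          rw [hc' q, mul_assoc, ← mul_assoc c⁻¹ c q, inv_mul_cancel, one_mul]
        calc q * r = (q * c) * (r * c⁻¹) := h2.symm
          _ = (r * c⁻¹) * (q * c) := (hx' _).symm
          _ = r * q := h3
      have himg : ∀ h : QuaternionGroup 2, e ⟨q, hq⟩ * h = h * e ⟨q, hq⟩ := by
        intro h
        have : (⟨q, hq⟩ : Q) * e.symm h = e.symm h * ⟨q, hq⟩ :=
          Subtype.ext (hqcen _ (e.symm h).2)
        calc e ⟨q, hq⟩ * h = e (⟨q, hq⟩ * e.symm h) := by rw [map_mul, e.apply_symm_apply]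
          _ = e (e.symm h * ⟨q, hq⟩) := by rw [this]
          _ = h * e ⟨q, hq⟩ := by rw [map_mul, e.apply_symm_apply]
      have hqC : q ∈ C := by
        rcases q8_central (e ⟨q, hq⟩) himg with h | h
        · have : (⟨q, hq⟩ : Q) = 1 := e.injective (by simp [h])
          have : q = 1 := congrArg Subtype.val this
          rw [this]; exact one_mem C
        · have : (⟨q, hq⟩ : Q) = ζ := by
            rw [hζ]; exact e.injective (by rw [e.apply_symm_apply, h])
          have : q = z := congrArg Subtype.val this
          rw [this]; exact hzC
      exact mul_mem hqC hc
    · exact hCcen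
  -- conclusions
  refine ⟨hcommutator.trans hsq_top.symm, ?_, ?_, ?_, ?_⟩
  · rw [hcommutator, hZz, Nat.card_zpowers]
    exact orderOf_eq_prime hz_sq hz_ne
  · rw [hcenter]; exact hCcyc
  · rw [hcenter]; exact hCcard
  · intro E hE
    rw [hcenter] at hE
    have hCE : C ≤ E := hE.le
    obtain ⟨x, hxE, hxC⟩ := SetLike.exists_of_lt hE
    obtain ⟨q, hq, c, hc, rfl⟩ := hprod x
    have hqE : q ∈ E := by
      have : q = (q * c) * c⁻¹ := by rw [mul_assoc, mul_inv_cancel, mul_one]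
      rw [this]
      exact mul_mem hxE (inv_mem (hCE hc))
    have hqC : q ∉ C := fun h => hxC (mul_mem h hc)
    have hq1 : (⟨q, hq⟩ : Q) ≠ 1 := by
      intro h
      have hq' : q = 1 := congrArg Subtype.val h
      rw [hq'] at hqC
      exact hqC (one_mem C)
    have hqζ : (⟨q, hq⟩ : Q) ≠ ζ := by
      intro h
      have hq' : q = z := congrArg Subtype.val h
      rw [hq'] at hqC
      exact hqC hzC
    have he1 : e ⟨q, hq⟩ ≠ 1 := fun h => hq1 (e.injective (by simp [h]))
    have he2 : e ⟨q, hq⟩ ≠ QuaternionGroup.a 2 := by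
      intro h
      apply hqζ
      rw [hζ]
      exact e.injective (by rw [e.apply_symm_apply, h])
    have hsq : q ^ 2 = z := by
      have := q8_noncentral_sq (e ⟨q, hq⟩) he1 he2
      rw [← map_pow] at this
      have h2 : (⟨q, hq⟩ : Q) ^ 2 = ζ := by
        rw [hζ]; exact e.injective (by rw [e.apply_symm_apply, this])
      calc q ^ 2 = (((⟨q, hq⟩ : Q) ^ 2 : Q) : S) := by rw [SubmonoidClass.coe_pow]
        _ = z := by rw [h2]
    have hzE : z ∈ sqSubgroup E := Subgroup.subset_closure ⟨q, hqE, hsq⟩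
    calc ⁅(⊤ : Subgroup S), E⁆ ≤ ⁅(⊤ : Subgroup S), (⊤ : Subgroup S)⁆ :=
          Subgroup.commutator_mono le_rfl le_top
      _ = commutator S := (commutator_def S).symm
      _ = Zz := hcommutator
      _ ≤ sqSubgroup E := Subgroup.zpowers_le.mpr hzE
end
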